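/- arXiv:2201.02549 — 2 statements merged into one kernel-verified Lean document; each statement's English description precedes it below -/
import Mathlib

section
/- Let ω be a non-quasianalytic weight function and N ≥ 1. If f ∈ 𝒪_{M,ω}(ℝ^N) and g ∈ 𝒮_ω(ℝ^N), then the pointwise product f·g belongs to 𝒮_ω(ℝ^N). -/
open MeasureTheory
open scoped ENNReal

noncomputable section

/-- The Young conjugate `φ*_ω(s) = sup_{t ≥ 0} (s·t − ω(eᵗ))`, valued in `[0,∞]`. -/
def phiStar (ω : ℝ → ℝ) (s : ℝ) : ℝ≥0∞ :=
  ⨆ t : {t : ℝ // 0 ≤ t}, ENNReal.ofReal (s * t.1 - ω (Real.exp t.1))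

/-- `exp : [0,∞] → [0,∞]` with the convention `exp(+∞) = +∞`. -/
def expE (a : ℝ≥0∞) : ℝ≥0∞ :=
  if a = ∞ then ∞ else ENNReal.ofReal (Real.exp a.toReal)

/-- `a ↦ exp(−a)` on `[0,∞]` with the convention `exp(−∞) = 0`. -/
def expNegE (a : ℝ≥0∞) : ℝ≥0∞ :=
  if a = ∞ then 0 else ENNReal.ofReal (Real.exp (-a.toReal))

/-- A non-quasianalytic weight function in the sense of Braun–Meise–Taylor
(Beurling setting, vanishing on `[0,1]`). -/
structure IsNQWeight (ω : ℝ → ℝ) : Prop where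
  continuous : ContinuousOn ω (Set.Ici 0)
  monotone : MonotoneOn ω (Set.Ici 0)
  nonneg : ∀ t, 0 ≤ t → 0 ≤ ω t
  zero_on_unit : ∀ t, 0 ≤ t → t ≤ 1 → ω t = 0
  alpha : ∃ K : ℝ, 1 ≤ K ∧ ∀ t, 0 ≤ t → ω (2 * t) ≤ K * (1 + ω t)
  beta : IntegrableOn (fun t => ω t / (1 + t ^ 2)) (Set.Ici 1)
  gamma : ∃ a : ℝ, ∃ b : ℝ, 0 < b ∧ ∀ t, 0 ≤ t → a + b * Real.log (1 + t) ≤ ω t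
  delta : ConvexOn ℝ (Set.Ici 0) (fun t => ω (Real.exp t))

/-- The seminorm `q_{m,n}(f) = sup_{j,x} ‖D^j f(x)‖ exp(n ω(|x|) − m φ*_ω(j/m))`, in `[0,∞]`. -/
def qSem {N : ℕ} (ω : ℝ → ℝ) (m n : ℕ) (f : EuclideanSpace ℝ (Fin N) → ℂ) : ℝ≥0∞ :=
  ⨆ (j : ℕ) (x : EuclideanSpace ℝ (Fin N)),
    ENNReal.ofReal (‖iteratedFDeriv ℝ j f x‖ * Real.exp (n * ω ‖x‖)) *
      expNegE ((m : ℝ≥0∞) * phiStar ω ((j : ℝ) / (m : ℝ)))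

/-- The seminorm `r_{m,n}(f) = sup_{j,x} ‖D^j f(x)‖ exp(−n ω(|x|) − m φ*_ω(j/m))`, in `[0,∞]`. -/
def rSem {N : ℕ} (ω : ℝ → ℝ) (m n : ℕ) (f : EuclideanSpace ℝ (Fin N) → ℂ) : ℝ≥0∞ :=
  ⨆ (j : ℕ) (x : EuclideanSpace ℝ (Fin N)),
    ENNReal.ofReal (‖iteratedFDeriv ℝ j f x‖ * Real.exp (-(n * ω ‖x‖))) *
      expNegE ((m : ℝ≥0∞) * phiStar ω ((j : ℝ) / (m : ℝ)))

/-- Membership in the Björck space `𝒮_ω(ℝ^N)`. -/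
def MemSomega {N : ℕ} (ω : ℝ → ℝ) (f : EuclideanSpace ℝ (Fin N) → ℂ) : Prop :=
  ContDiff ℝ (⊤ : ℕ∞) f ∧ ∀ m n : ℕ, 1 ≤ m → qSem ω m n f ≠ ∞

/-- Membership in the space `𝒪_{M,ω}(ℝ^N)` of slowly increasing functions of Beurling type. -/
def MemOMomega {N : ℕ} (ω : ℝ → ℝ) (f : EuclideanSpace ℝ (Fin N) → ℂ) : Prop :=
  ContDiff ℝ (⊤ : ℕ∞) f ∧ ∀ m : ℕ, 1 ≤ m → ∃ n : ℕ, ∃ C : ℝ, 0 < C ∧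
    ∀ (j : ℕ) (x : EuclideanSpace ℝ (Fin N)),
      (ENNReal.ofReal ‖iteratedFDeriv ℝ j f x‖) ≤
        ENNReal.ofReal (C * Real.exp (n * ω ‖x‖)) *
          expE ((m : ℝ≥0∞) * phiStar ω ((j : ℝ) / (m : ℝ)))

/-- Membership in the space `𝒪_{C,ω}(ℝ^N)` of very slowly increasing functions. -/
def MemOComega {N : ℕ} (ω : ℝ → ℝ) (f : EuclideanSpace ℝ (Fin N) → ℂ) : Prop :=
  ContDiff ℝ (⊤ : ℕ∞) f ∧ ∃ n : ℕ, ∀ m : ℕ, 1 ≤ m → ∃ C : ℝ, 0 < C ∧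
    ∀ (j : ℕ) (x : EuclideanSpace ℝ (Fin N)),
      (ENNReal.ofReal ‖iteratedFDeriv ℝ j f x‖) ≤
        ENNReal.ofReal (C * Real.exp (n * ω ‖x‖)) *
          expE ((m : ℝ≥0∞) * phiStar ω ((j : ℝ) / (m : ℝ)))


lemma le_phiStar (ω : ℝ → ℝ) {s t : ℝ} (ht : 0 ≤ t) :
    ENNReal.ofReal (s * t - ω (Real.exp t)) ≤ phiStar ω s :=
  le_iSup (fun u : {t : ℝ // 0 ≤ t} => ENNReal.ofReal (s * u.1 - ω (Real.exp u.1))) ⟨t, ht⟩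

lemma phiStar_mono (ω : ℝ → ℝ) {s s' : ℝ} (h : s ≤ s') : phiStar ω s ≤ phiStar ω s' :=
  iSup_mono fun t => ENNReal.ofReal_le_ofReal
    (sub_le_sub_right (mul_le_mul_of_nonneg_right h t.2) _)

lemma phiStar_superadd {ω : ℝ → ℝ} (hω : ∀ u, 0 ≤ u → 0 ≤ ω u) {s1 s2 : ℝ}
    (h1 : 0 ≤ s1) (h2 : 0 ≤ s2) :
    phiStar ω s1 + phiStar ω s2 ≤ phiStar ω (s1 + s2) := by
  rw [phiStar, ENNReal.iSup_add]
  refine iSup_le fun t1 => ?_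
  rw [phiStar, ENNReal.add_iSup]
  refine iSup_le fun t2 => ?_
  have hφ1 : 0 ≤ ω (Real.exp t1.1) := hω _ (Real.exp_pos _).le
  have hφ2 : 0 ≤ ω (Real.exp t2.1) := hω _ (Real.exp_pos _).le
  rcases le_or_gt (s1 * t1.1 - ω (Real.exp t1.1)) 0 with ha | ha
  · rw [ENNReal.ofReal_eq_zero.2 ha, zero_add]
    refine le_trans (ENNReal.ofReal_le_ofReal ?_) (le_phiStar ω t2.2)
    nlinarith [mul_nonneg h1 t2.2]
  rcases le_or_gt (s2 * t2.1 - ω (Real.exp t2.1)) 0 with hb | hb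
  · rw [ENNReal.ofReal_eq_zero.2 hb, add_zero]
    refine le_trans (ENNReal.ofReal_le_ofReal ?_) (le_phiStar ω t1.2)
    nlinarith [mul_nonneg h2 t1.2]
  rw [← ENNReal.ofReal_add ha.le hb.le]
  rcases le_total t1.1 t2.1 with hc | hc
  · refine le_trans (ENNReal.ofReal_le_ofReal ?_) (le_phiStar ω t2.2)
    nlinarith [mul_le_mul_of_nonneg_left hc h1]
  · refine le_trans (ENNReal.ofReal_le_ofReal ?_) (le_phiStar ω t1.2)
    nlinarith [mul_le_mul_of_nonneg_left hc h2]

lemma phiStar_alpha {ω : ℝ → ℝ} (hω : ∀ u, 0 ≤ u → 0 ≤ ω u) (hω1 : ω 1 = 0)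
    (K' : ℕ) (hα : ∀ t, 0 ≤ t → ω (2 * t) ≤ (K' : ℝ) * (1 + ω t)) {s : ℝ} (hs : 0 ≤ s) :
    (K' : ℝ≥0∞) * phiStar ω s + ENNReal.ofReal ((K' : ℝ) * s * Real.log 2) ≤
      phiStar ω ((K' : ℝ) * s) + (K' : ℝ≥0∞) := by
  have hω2 : ω 2 ≤ (K' : ℝ) := by
    have := hα 1 zero_le_one
    simpa [hω1] using this
  have hlog2 : (0 : ℝ) ≤ Real.log 2 := Real.log_nonneg one_le_two
  rw [phiStar, ENNReal.mul_iSup, ENNReal.iSup_add]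
  refine iSup_le fun t => ?_
  rw [← ENNReal.ofReal_natCast K']
  rcases le_or_gt (s * t.1 - ω (Real.exp t.1)) 0 with ha | ha
  · rw [ENNReal.ofReal_eq_zero.2 ha, mul_zero, zero_add]
    calc ENNReal.ofReal ((K' : ℝ) * s * Real.log 2)
        ≤ ENNReal.ofReal (((K' : ℝ) * s * Real.log 2 - ω 2) + ω 2) := by
          rw [sub_add_cancel]
      _ ≤ ENNReal.ofReal ((K' : ℝ) * s * Real.log 2 - ω 2) + ENNReal.ofReal (ω 2) :=
          ENNReal.ofReal_add_le
      _ ≤ phiStar ω ((K' : ℝ) * s) + ENNReal.ofReal ((K' : ℝ)) := by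
          gcongr
          have := le_phiStar ω (s := (K' : ℝ) * s) hlog2
          rwa [Real.exp_log two_pos] at this
  · have hKnn : (0 : ℝ) ≤ (K' : ℝ) := Nat.cast_nonneg _
    rw [← ENNReal.ofReal_mul hKnn,
      ← ENNReal.ofReal_add (mul_nonneg hKnn ha.le)
        (mul_nonneg (mul_nonneg hKnn hs) hlog2)]
    have hu : (0 : ℝ) ≤ t.1 + Real.log 2 := add_nonneg t.2 hlog2
    have hφu : ω (Real.exp (t.1 + Real.log 2)) ≤ (K' : ℝ) + (K' : ℝ) * ω (Real.exp t.1) := by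
      have : Real.exp (t.1 + Real.log 2) = 2 * Real.exp t.1 := by
        rw [Real.exp_add, Real.exp_log two_pos]; ring
      rw [this]
      have := hα (Real.exp t.1) (Real.exp_pos _).le
      nlinarith
    calc ENNReal.ofReal ((K' : ℝ) * (s * t.1 - ω (Real.exp t.1)) + (K' : ℝ) * s * Real.log 2)
        ≤ ENNReal.ofReal (((K' : ℝ) * s * (t.1 + Real.log 2) -
            ω (Real.exp (t.1 + Real.log 2))) + (K' : ℝ)) := by
          apply ENNReal.ofReal_le_ofReal; nlinarith
      _ ≤ ENNReal.ofReal ((K' : ℝ) * s * (t.1 + Real.log 2) -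
            ω (Real.exp (t.1 + Real.log 2))) + ENNReal.ofReal ((K' : ℝ)) :=
          ENNReal.ofReal_add_le
      _ ≤ phiStar ω ((K' : ℝ) * s) + ENNReal.ofReal ((K' : ℝ)) := by
          gcongr
          exact le_phiStar ω hu

lemma phiStar_key {ω : ℝ → ℝ} (hω : ∀ u, 0 ≤ u → 0 ≤ ω u) (hω1 : ω 1 = 0)
    (K' m : ℕ) (hK : 1 ≤ K') (hm : 1 ≤ m)
    (hα : ∀ t, 0 ≤ t → ω (2 * t) ≤ (K' : ℝ) * (1 + ω t)) (j : ℕ) :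
    ((K' * m : ℕ) : ℝ≥0∞) * phiStar ω ((j : ℝ) / ((K' * m : ℕ) : ℝ)) +
        ENNReal.ofReal ((j : ℝ) * Real.log 2) ≤
      (m : ℝ≥0∞) * phiStar ω ((j : ℝ) / (m : ℝ)) + ((K' * m : ℕ) : ℝ≥0∞) := by
  have hm0 : (0:ℝ) < m := by exact_mod_cast hm
  have hK0 : (0:ℝ) < K' := by exact_mod_cast hK
  have hp0 : (0:ℝ) < ((K' * m : ℕ) : ℝ) := by push_cast; positivity
  set s : ℝ := (j : ℝ) / ((K' * m : ℕ) : ℝ) with hs_def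
  have hs : 0 ≤ s := div_nonneg j.cast_nonneg hp0.le
  have e1 : (K' : ℝ) * s = (j : ℝ) / (m : ℝ) := by
    rw [hs_def]; push_cast; field_simp
  have e2 : (m : ℝ) * ((K' : ℝ) * s * Real.log 2) = (j : ℝ) * Real.log 2 := by
    rw [hs_def]; push_cast; field_simp
  have H := phiStar_alpha hω hω1 K' hα hs
  have H2 := mul_le_mul_right H (m : ℝ≥0∞)
  rw [mul_add, mul_add, ← mul_assoc] at H2
  have c1 : (m : ℝ≥0∞) * (K' : ℝ≥0∞) = ((K' * m : ℕ) : ℝ≥0∞) := by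
    rw [Nat.cast_mul, mul_comm]
  have c2 : (m : ℝ≥0∞) * ENNReal.ofReal ((K' : ℝ) * s * Real.log 2) =
      ENNReal.ofReal ((j : ℝ) * Real.log 2) := by
    rw [← ENNReal.ofReal_natCast m, ← ENNReal.ofReal_mul (Nat.cast_nonneg m), e2]
  rw [c1, c2, e1] at H2
  exact H2

/-- If `f ∈ 𝒪_{M,ω}(ℝ^N)` and `g ∈ 𝒮_ω(ℝ^N)` then `f·g ∈ 𝒮_ω(ℝ^N)`. -/
theorem stmt18 {N : ℕ} (hN : 1 ≤ N) (ω : ℝ → ℝ) (hω : IsNQWeight ω)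
    (f g : EuclideanSpace ℝ (Fin N) → ℂ)
    (hf : MemOMomega ω f) (hg : MemSomega ω g) :
    MemSomega ω (fun x => f x * g x) := by
  obtain ⟨hfC, hfB⟩ := hf
  obtain ⟨hgC, hgB⟩ := hg
  refine ⟨hfC.mul hgC, ?_⟩
  intro m n hm
  obtain ⟨K, hK1, hKα⟩ := hω.alpha
  set K' : ℕ := ⌈K⌉₊ with hK'def
  have hK'1 : 1 ≤ K' := Nat.one_le_ceil_iff.mpr (lt_of_lt_of_le one_pos hK1)
  have hα' : ∀ t, 0 ≤ t → ω (2 * t) ≤ (K' : ℝ) * (1 + ω t) := by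
    intro t ht
    refine le_trans (hKα t ht) (mul_le_mul_of_nonneg_right (Nat.le_ceil K) ?_)
    have := hω.nonneg t ht; linarith
  set p : ℕ := K' * m with hpdef
  have hp1 : 1 ≤ p := by simpa [hpdef] using Nat.mul_le_mul hK'1 hm
  obtain ⟨n0, C, hC, hfb⟩ := hfB p hp1
  have hQne : qSem ω p (n + n0) g ≠ ∞ := hgB p (n + n0) hp1
  set Q : ℝ := (qSem (N := N) ω p (n + n0) g).toReal with hQdef
  have hQ0 : 0 ≤ Q := ENNReal.toReal_nonneg
  refine ne_top_of_le_ne_top (ENNReal.ofReal_ne_top (r := C * Q * Real.exp (p : ℝ))) ?_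
  rw [qSem]
  refine iSup₂_le fun j x => ?_
  have hm0 : (0 : ℝ) < m := by exact_mod_cast hm
  have hp0 : (0 : ℝ) < p := by exact_mod_cast hp1
  have hmp : (m : ℝ) ≤ (p : ℝ) := by
    have : m ≤ p := by
      calc m = 1 * m := (one_mul m).symm
        _ ≤ K' * m := Nat.mul_le_mul_right m hK'1
    exact_mod_cast this
  by_cases hfin : (m : ℝ≥0∞) * phiStar ω ((j : ℝ) / (m : ℝ)) = ∞
  · rw [expNegE, if_pos hfin, mul_zero]; exact zero_le
  rw [expNegE, if_neg hfin]
  have hΦm : phiStar ω ((j : ℝ) / (m : ℝ)) ≠ ∞ := by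
    intro h
    apply hfin
    rw [h, ENNReal.mul_top (Nat.cast_ne_zero.mpr (by omega) : (m : ℝ≥0∞) ≠ 0)]
  have hΦle : ∀ i : ℕ, i ≤ j → phiStar ω ((i : ℝ) / (p : ℝ)) ≤ phiStar ω ((j : ℝ) / (m : ℝ)) := by
    intro i hi
    exact phiStar_mono ω (div_le_div₀ j.cast_nonneg (by exact_mod_cast hi) hm0 hmp)
  have hΦfin : ∀ i : ℕ, i ≤ j → phiStar ω ((i : ℝ) / (p : ℝ)) ≠ ∞ := fun i hi =>
    ne_top_of_le_ne_top hΦm (hΦle i hi)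
  -- bound for f
  have hfr : ∀ i : ℕ, i ≤ j → ‖iteratedFDeriv ℝ i f x‖ ≤
      C * Real.exp ((n0 : ℝ) * ω ‖x‖) * Real.exp ((p : ℝ) * (phiStar ω ((i : ℝ) / (p : ℝ))).toReal) := by
    intro i hi
    have h1 := hfb i x
    have h2 : (p : ℝ≥0∞) * phiStar ω ((i : ℝ) / (p : ℝ)) ≠ ∞ :=
      ENNReal.mul_ne_top (ENNReal.natCast_ne_top p) (hΦfin i hi)
    rw [expE, if_neg h2, ENNReal.toReal_mul, ENNReal.toReal_natCast,
      ← ENNReal.ofReal_mul (by positivity)] at h1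
    exact (ENNReal.ofReal_le_ofReal_iff (by positivity)).1 h1
  -- bound for g
  have hgr : ∀ i : ℕ, i ≤ j → ‖iteratedFDeriv ℝ i g x‖ ≤
      Q * Real.exp (-((↑(n + n0) : ℝ) * ω ‖x‖)) *
        Real.exp ((p : ℝ) * (phiStar ω ((i : ℝ) / (p : ℝ))).toReal) := by
    intro i hi
    have h2 : (p : ℝ≥0∞) * phiStar ω ((i : ℝ) / (p : ℝ)) ≠ ∞ :=
      ENNReal.mul_ne_top (ENNReal.natCast_ne_top p) (hΦfin i hi)
    have h1 : ENNReal.ofReal (‖iteratedFDeriv ℝ i g x‖ * Real.exp ((↑(n + n0) : ℝ) * ω ‖x‖)) *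
        expNegE ((p : ℝ≥0∞) * phiStar ω ((i : ℝ) / (p : ℝ))) ≤ qSem ω p (n + n0) g := by
      rw [qSem]
      exact le_iSup₂_of_le i x le_rfl
    rw [expNegE, if_neg h2, ENNReal.toReal_mul, ENNReal.toReal_natCast,
      ← ENNReal.ofReal_mul (by positivity)] at h1
    have h3 := (ENNReal.ofReal_le_iff_le_toReal hQne).1 h1
    rw [← hQdef] at h3
    have h4 := mul_le_mul_of_nonneg_right h3
      (mul_pos (Real.exp_pos (-((↑(n + n0) : ℝ) * ω ‖x‖)))
        (Real.exp_pos ((p : ℝ) * (phiStar ω ((i : ℝ) / (p : ℝ))).toReal))).le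
    calc ‖iteratedFDeriv ℝ i g x‖
        = ‖iteratedFDeriv ℝ i g x‖ * Real.exp ((↑(n + n0) : ℝ) * ω ‖x‖) *
            Real.exp (-((p : ℝ) * (phiStar ω ((i : ℝ) / (p : ℝ))).toReal)) *
            (Real.exp (-((↑(n + n0) : ℝ) * ω ‖x‖)) *
              Real.exp ((p : ℝ) * (phiStar ω ((i : ℝ) / (p : ℝ))).toReal)) := by
          rw [Real.exp_neg ((↑(n + n0) : ℝ) * ω ‖x‖),
            Real.exp_neg ((p : ℝ) * (phiStar ω ((i : ℝ) / (p : ℝ))).toReal)]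
          field_simp
      _ ≤ Q * (Real.exp (-((↑(n + n0) : ℝ) * ω ‖x‖)) *
            Real.exp ((p : ℝ) * (phiStar ω ((i : ℝ) / (p : ℝ))).toReal)) := h4
      _ = Q * Real.exp (-((↑(n + n0) : ℝ) * ω ‖x‖)) *
            Real.exp ((p : ℝ) * (phiStar ω ((i : ℝ) / (p : ℝ))).toReal) := (mul_assoc _ _ _).symm
  -- superadditivity, real version
  have hsupr : ∀ i : ℕ, i ≤ j →
      (phiStar ω ((i : ℝ) / (p : ℝ))).toReal + (phiStar ω ((↑(j - i) : ℝ) / (p : ℝ))).toReal ≤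
        (phiStar ω ((j : ℝ) / (p : ℝ))).toReal := by
    intro i hi
    have hadd : (i : ℝ) / (p : ℝ) + (↑(j - i) : ℝ) / (p : ℝ) = (j : ℝ) / (p : ℝ) := by
      rw [← add_div, Nat.cast_sub hi]; ring_nf
    have h := phiStar_superadd hω.nonneg (div_nonneg i.cast_nonneg hp0.le)
      (div_nonneg (j - i).cast_nonneg hp0.le)
    rw [hadd] at h
    have h2 := ENNReal.toReal_mono (hΦfin j le_rfl) h
    rwa [ENNReal.toReal_add (hΦfin i hi) (hΦfin (j - i) (Nat.sub_le j i))] at h2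
  -- key inequality, real version
  have hkey : (p : ℝ) * (phiStar ω ((j : ℝ) / (p : ℝ))).toReal + (j : ℝ) * Real.log 2 ≤
      (m : ℝ) * (phiStar ω ((j : ℝ) / (m : ℝ))).toReal + (p : ℝ) := by
    have hk := phiStar_key hω.nonneg (hω.zero_on_unit 1 zero_le_one le_rfl) K' m hK'1 hm hα' j
    rw [← hpdef] at hk
    have hR : (m : ℝ≥0∞) * phiStar ω ((j : ℝ) / (m : ℝ)) + (p : ℝ≥0∞) ≠ ∞ :=
      ENNReal.add_ne_top.mpr ⟨hfin, ENNReal.natCast_ne_top p⟩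
    have h2 := ENNReal.toReal_mono hR hk
    rwa [ENNReal.toReal_add (ENNReal.mul_ne_top (ENNReal.natCast_ne_top p) (hΦfin j le_rfl))
        ENNReal.ofReal_ne_top,
      ENNReal.toReal_add hfin (ENNReal.natCast_ne_top p),
      ENNReal.toReal_mul, ENNReal.toReal_mul, ENNReal.toReal_natCast, ENNReal.toReal_natCast,
      ENNReal.toReal_ofReal (mul_nonneg j.cast_nonneg (Real.log_nonneg one_le_two))] at h2
  -- bound on the derivative of the product
  set D : ℝ := C * Q * Real.exp (-((n : ℝ) * ω ‖x‖)) *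
      Real.exp ((p : ℝ) * (phiStar ω ((j : ℝ) / (p : ℝ))).toReal) with hD_def
  have hsum : ‖iteratedFDeriv ℝ j (fun y => f y * g y) x‖ ≤ (2 ^ j : ℝ) * D := by
    calc ‖iteratedFDeriv ℝ j (fun y => f y * g y) x‖
        ≤ ∑ i ∈ Finset.range (j + 1), (j.choose i : ℝ) * ‖iteratedFDeriv ℝ i f x‖ *
            ‖iteratedFDeriv ℝ (j - i) g x‖ := norm_iteratedFDeriv_mul_le hfC hgC x (by exact_mod_cast le_top)
      _ ≤ ∑ i ∈ Finset.range (j + 1), (j.choose i : ℝ) * D := by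
          refine Finset.sum_le_sum fun i hi => ?_
          have hij : i ≤ j := Finset.mem_range_succ_iff.mp hi
          have h1 := hfr i hij
          have h2 := hgr (j - i) (Nat.sub_le j i)
          have step1 : (j.choose i : ℝ) * ‖iteratedFDeriv ℝ i f x‖ *
              ‖iteratedFDeriv ℝ (j - i) g x‖ ≤
              (j.choose i : ℝ) *
                (C * Real.exp ((n0 : ℝ) * ω ‖x‖) *
                  Real.exp ((p : ℝ) * (phiStar ω ((i : ℝ) / (p : ℝ))).toReal)) *
                (Q * Real.exp (-((↑(n + n0) : ℝ) * ω ‖x‖)) *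
                  Real.exp ((p : ℝ) * (phiStar ω ((↑(j - i) : ℝ) / (p : ℝ))).toReal)) := by
            refine mul_le_mul (mul_le_mul le_rfl h1 (norm_nonneg _) (Nat.cast_nonneg _))
              h2 (norm_nonneg _) ?_
            exact mul_nonneg (Nat.cast_nonneg _)
              (mul_nonneg (mul_nonneg hC.le (Real.exp_nonneg _)) (Real.exp_nonneg _))
          refine step1.trans ?_
          have e1 : Real.exp ((n0 : ℝ) * ω ‖x‖) * Real.exp (-((↑(n + n0) : ℝ) * ω ‖x‖)) =
              Real.exp (-((n : ℝ) * ω ‖x‖)) := by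
            rw [← Real.exp_add]; congr 1; push_cast; ring
          have e2 : Real.exp ((p : ℝ) * (phiStar ω ((i : ℝ) / (p : ℝ))).toReal) *
              Real.exp ((p : ℝ) * (phiStar ω ((↑(j - i) : ℝ) / (p : ℝ))).toReal) ≤
              Real.exp ((p : ℝ) * (phiStar ω ((j : ℝ) / (p : ℝ))).toReal) := by
            rw [← Real.exp_add, ← mul_add]
            exact Real.exp_le_exp.2 (mul_le_mul_of_nonneg_left (hsupr i hij) hp0.le)
          calc (j.choose i : ℝ) *
                (C * Real.exp ((n0 : ℝ) * ω ‖x‖) *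
                  Real.exp ((p : ℝ) * (phiStar ω ((i : ℝ) / (p : ℝ))).toReal)) *
                (Q * Real.exp (-((↑(n + n0) : ℝ) * ω ‖x‖)) *
                  Real.exp ((p : ℝ) * (phiStar ω ((↑(j - i) : ℝ) / (p : ℝ))).toReal))
              = (j.choose i : ℝ) * (C * Q) *
                  (Real.exp ((n0 : ℝ) * ω ‖x‖) * Real.exp (-((↑(n + n0) : ℝ) * ω ‖x‖))) *
                  (Real.exp ((p : ℝ) * (phiStar ω ((i : ℝ) / (p : ℝ))).toReal) *
                    Real.exp ((p : ℝ) * (phiStar ω ((↑(j - i) : ℝ) / (p : ℝ))).toReal)) := by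
                ring
            _ ≤ (j.choose i : ℝ) * (C * Q) *
                  (Real.exp ((n0 : ℝ) * ω ‖x‖) * Real.exp (-((↑(n + n0) : ℝ) * ω ‖x‖))) *
                  Real.exp ((p : ℝ) * (phiStar ω ((j : ℝ) / (p : ℝ))).toReal) := by
                refine mul_le_mul_of_nonneg_left e2 ?_
                exact mul_nonneg (mul_nonneg (Nat.cast_nonneg _) (mul_nonneg hC.le hQ0))
                  (mul_nonneg (Real.exp_nonneg _) (Real.exp_nonneg _))
            _ = (j.choose i : ℝ) * D := by rw [e1, hD_def]; ring
      _ = (2 ^ j : ℝ) * D := by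
          rw [← Finset.sum_mul, ← Nat.cast_sum, Nat.sum_range_choose]
          push_cast; ring
  -- conclusion
  rw [← ENNReal.ofReal_mul (by positivity)]
  apply ENNReal.ofReal_le_ofReal
  rw [ENNReal.toReal_mul, ENNReal.toReal_natCast]
  have h5 : (2 : ℝ) ^ j * Real.exp ((p : ℝ) * (phiStar ω ((j : ℝ) / (p : ℝ))).toReal) *
      Real.exp (-((m : ℝ) * (phiStar ω ((j : ℝ) / (m : ℝ))).toReal)) ≤ Real.exp (p : ℝ) := by
    have h6 : Real.exp ((p : ℝ) * (phiStar ω ((j : ℝ) / (p : ℝ))).toReal -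
        (m : ℝ) * (phiStar ω ((j : ℝ) / (m : ℝ))).toReal) ≤
        Real.exp ((p : ℝ) - (j : ℝ) * Real.log 2) := Real.exp_le_exp.2 (by linarith)
    have h7 : Real.exp ((j : ℝ) * Real.log 2) = (2 : ℝ) ^ j := by
      rw [Real.exp_nat_mul, Real.exp_log two_pos]
    calc (2 : ℝ) ^ j * Real.exp ((p : ℝ) * (phiStar ω ((j : ℝ) / (p : ℝ))).toReal) *
          Real.exp (-((m : ℝ) * (phiStar ω ((j : ℝ) / (m : ℝ))).toReal))
        = (2 : ℝ) ^ j * Real.exp ((p : ℝ) * (phiStar ω ((j : ℝ) / (p : ℝ))).toReal -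
            (m : ℝ) * (phiStar ω ((j : ℝ) / (m : ℝ))).toReal) := by
          rw [mul_assoc, ← Real.exp_add, ← sub_eq_add_neg]
      _ ≤ (2 : ℝ) ^ j * Real.exp ((p : ℝ) - (j : ℝ) * Real.log 2) := by
          exact mul_le_mul_of_nonneg_left h6 (by positivity)
      _ = Real.exp (p : ℝ) := by
          rw [Real.exp_sub, h7]; field_simp
  calc ‖iteratedFDeriv ℝ j (fun y => f y * g y) x‖ * Real.exp ((n : ℝ) * ω ‖x‖) *
        Real.exp (-((m : ℝ) * (phiStar ω ((j : ℝ) / (m : ℝ))).toReal))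
      ≤ (2 ^ j : ℝ) * D * Real.exp ((n : ℝ) * ω ‖x‖) *
          Real.exp (-((m : ℝ) * (phiStar ω ((j : ℝ) / (m : ℝ))).toReal)) := by
        exact mul_le_mul_of_nonneg_right (mul_le_mul_of_nonneg_right hsum (Real.exp_nonneg _))
          (Real.exp_nonneg _)
    _ = C * Q * (Real.exp (-((n : ℝ) * ω ‖x‖)) * Real.exp ((n : ℝ) * ω ‖x‖)) *
          ((2 : ℝ) ^ j * Real.exp ((p : ℝ) * (phiStar ω ((j : ℝ) / (p : ℝ))).toReal) *
            Real.exp (-((m : ℝ) * (phiStar ω ((j : ℝ) / (m : ℝ))).toReal))) := by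
        rw [hD_def]; ring
    _ = C * Q * ((2 : ℝ) ^ j * Real.exp ((p : ℝ) * (phiStar ω ((j : ℝ) / (p : ℝ))).toReal) *
          Real.exp (-((m : ℝ) * (phiStar ω ((j : ℝ) / (m : ℝ))).toReal))) := by
        rw [← Real.exp_add, neg_add_cancel, Real.exp_zero, mul_one]
    _ ≤ C * Q * Real.exp (p : ℝ) := mul_le_mul_of_nonneg_left h5 (mul_nonneg hC.le hQ0)

end
end

section
/- Let ω be a non-quasianalytic weight function, N ≥ 1, and K ≥ 1 with ω(t₁+t₂) ≤ K(1+ω(t₁)+ω(t₂)) for all t₁, t₂ ≥ 0. Let n₀ ∈ ℕ be such that x ↦ exp(−n₀·ω(|x|)) belongs to L¹(ℝ^N), and let n ∈ ℕ. Then for all f, g ∈ 𝒮_ω(ℝ^N), every j ∈ ℕ and every x ∈ ℝ^N, ‖D^j(f⋆g)(x)‖·exp(n·ω(|x|)) ≤ e^{Kn} · ‖exp(−n₀·ω(|·|))‖_{L¹(ℝ^N)} · (sup_{y ∈ ℝ^N} |f(y)|·exp((Kn+n₀)·ω(|y|))) · (sup_{y ∈ ℝ^N} ‖D^j g(y)‖·exp(Kn·ω(|y|))),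 where (f⋆g)(x) = ∫_{ℝ^N} f(y)·g(x−y) dy. -/
open MeasureTheory
open scoped ENNReal

noncomputable section

set_option maxHeartbeats 1000000
set_option synthInstance.maxHeartbeats 400000

lemma auxPhiStarLe (ω : ℝ → ℝ) (a b : ℝ) (hb : 0 < b)
    (hab : ∀ t, 0 ≤ t → a + b * Real.log (1 + t) ≤ ω t) {s : ℝ} (hs : s ≤ b) :
    phiStar ω s ≤ ENNReal.ofReal (max 0 (-a)) := by
  refine iSup_le fun t => ENNReal.ofReal_le_ofReal ?_
  have ht := t.2
  have h1 : a + b * Real.log (1 + Real.exp t.1) ≤ ω (Real.exp t.1) := hab _ (Real.exp_pos _).le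
  have h2 : t.1 ≤ Real.log (1 + Real.exp t.1) := by
    calc t.1 = Real.log (Real.exp t.1) := (Real.log_exp _).symm
    _ ≤ _ := Real.log_le_log (Real.exp_pos _) (by linarith)
  have h3 : s * t.1 ≤ b * t.1 := mul_le_mul_of_nonneg_right hs ht
  have h4 : b * t.1 ≤ b * Real.log (1 + Real.exp t.1) := mul_le_mul_of_nonneg_left h2 hb.le
  have h5 : (0:ℝ) ≤ max 0 (-a) := le_max_left _ _
  have h6 : -a ≤ max 0 (-a) := le_max_right _ _
  linarith

lemma auxBound {N : ℕ} {ω : ℝ → ℝ} (hω : IsNQWeight ω) {f : EuclideanSpace ℝ (Fin N) → ℂ}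
    (hf : MemSomega ω f) (j n : ℕ) :
    ∃ C : ℝ, 0 ≤ C ∧ ∀ x, ‖iteratedFDeriv ℝ j f x‖ * Real.exp (n * ω ‖x‖) ≤ C := by
  obtain ⟨a, b, hb, hab⟩ := hω.gamma
  set m : ℕ := max 1 ⌈(j : ℝ) / b⌉₊ with hm
  have hm1 : 1 ≤ m := le_max_left _ _
  have hmpos : (0:ℝ) < m := by exact_mod_cast hm1
  have hmb : (j : ℝ) / (m : ℝ) ≤ b := by
    rw [div_le_iff₀ hmpos]
    have h1 : (j:ℝ)/b ≤ (⌈(j:ℝ)/b⌉₊ : ℝ) := Nat.le_ceil _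
    have h2 : ((⌈(j:ℝ)/b⌉₊ : ℕ) : ℝ) ≤ (m:ℝ) := by exact_mod_cast le_max_right 1 ⌈(j:ℝ)/b⌉₊
    have h3 : (j:ℝ)/b ≤ (m:ℝ) := h1.trans h2
    calc (j:ℝ) = ((j:ℝ)/b)*b := by field_simp
    _ ≤ (m:ℝ) * b := mul_le_mul_of_nonneg_right h3 hb.le
    _ = b * m := mul_comm _ _
  have hφ : phiStar ω ((j:ℝ)/(m:ℝ)) ≤ ENNReal.ofReal (max 0 (-a)) := auxPhiStarLe ω a b hb hab hmb
  have hfin : (m : ℝ≥0∞) * phiStar ω ((j:ℝ)/(m:ℝ)) ≤ ENNReal.ofReal ((m:ℝ) * max 0 (-a)) := by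
    rw [ENNReal.ofReal_mul hmpos.le]
    rw [ENNReal.ofReal_natCast]
    exact mul_le_mul_right hφ _
  have hne : (m : ℝ≥0∞) * phiStar ω ((j:ℝ)/(m:ℝ)) ≠ ∞ :=
    ne_top_of_le_ne_top ENNReal.ofReal_ne_top hfin
  set ε : ℝ := Real.exp (-((m:ℝ) * max 0 (-a))) with hε
  have hεpos : 0 < ε := Real.exp_pos _
  have hexp : ENNReal.ofReal ε ≤ expNegE ((m : ℝ≥0∞) * phiStar ω ((j:ℝ)/(m:ℝ))) := by
    rw [expNegE, if_neg hne]
    refine ENNReal.ofReal_le_ofReal (Real.exp_le_exp.mpr ?_)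
    have h := ENNReal.toReal_mono ENNReal.ofReal_ne_top hfin
    rw [ENNReal.toReal_ofReal (by positivity)] at h
    linarith
  have hQ := hf.2 m n hm1
  set Q := qSem ω m n f with hQdef
  have hεne : ENNReal.ofReal ε ≠ 0 := by simp [ENNReal.ofReal_pos.mpr hεpos, ne_of_gt]
  refine ⟨(Q / ENNReal.ofReal ε).toReal, ENNReal.toReal_nonneg, fun x => ?_⟩
  have hle : ENNReal.ofReal (‖iteratedFDeriv ℝ j f x‖ * Real.exp (n * ω ‖x‖)) *
      expNegE ((m : ℝ≥0∞) * phiStar ω ((j:ℝ)/(m:ℝ))) ≤ Q := by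
    rw [hQdef, qSem]
    exact le_iSup₂ (f := fun (j : ℕ) (x : EuclideanSpace ℝ (Fin N)) =>
      ENNReal.ofReal (‖iteratedFDeriv ℝ j f x‖ * Real.exp (n * ω ‖x‖)) *
        expNegE ((m : ℝ≥0∞) * phiStar ω ((j : ℝ) / (m : ℝ)))) j x
  have h2 : ENNReal.ofReal (‖iteratedFDeriv ℝ j f x‖ * Real.exp (n * ω ‖x‖)) *
      ENNReal.ofReal ε ≤ Q := le_trans (mul_le_mul_right hexp _) hle
  have h3 : ENNReal.ofReal (‖iteratedFDeriv ℝ j f x‖ * Real.exp (n * ω ‖x‖)) ≤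
      Q / ENNReal.ofReal ε := by
    rw [ENNReal.le_div_iff_mul_le (Or.inl hεne) (Or.inl ENNReal.ofReal_ne_top)]
    exact h2
  have hfinQ : Q / ENNReal.ofReal ε ≠ ∞ := (ENNReal.div_lt_top hQ hεne).ne
  exact (ENNReal.ofReal_le_iff_le_toReal hfinQ).mp h3

lemma auxCurrySmul {N j : ℕ} (c : ℂ)
    (A : EuclideanSpace ℝ (Fin N) →L[ℝ]
      ContinuousMultilinearMap ℝ (fun _ : Fin j => EuclideanSpace ℝ (Fin N)) ℂ) :
    (continuousMultilinearCurryLeftEquiv ℝ (fun _ : Fin (j+1) => EuclideanSpace ℝ (Fin N)) ℂ).symm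
      (c • A) =
    c • (continuousMultilinearCurryLeftEquiv ℝ
      (fun _ : Fin (j+1) => EuclideanSpace ℝ (Fin N)) ℂ).symm A := by
  ext v
  simp

lemma auxCurry0Smul {N : ℕ} (c z : ℂ) :
    (continuousMultilinearCurryFin0 ℝ (EuclideanSpace ℝ (Fin N)) ℂ).symm (c * z) =
    c • (continuousMultilinearCurryFin0 ℝ (EuclideanSpace ℝ (Fin N)) ℂ).symm z := by
  ext v
  simp


lemma auxSmulNormCLM {N k : ℕ} (c : ℂ)
    (A : EuclideanSpace ℝ (Fin N) →L[ℝ]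
      ContinuousMultilinearMap ℝ (fun _ : Fin k => EuclideanSpace ℝ (Fin N)) ℂ) :
    ‖c • A‖ ≤ ‖c‖ * ‖A‖ := by
  refine ContinuousLinearMap.opNorm_le_bound _ (mul_nonneg (norm_nonneg _) (ContinuousLinearMap.opNorm_nonneg A))
    fun v => ?_
  rw [ContinuousLinearMap.smul_apply, norm_smul, mul_assoc]
  exact mul_le_mul_of_nonneg_left (A.le_opNorm v) (norm_nonneg _)

instance auxCENorm {N k : ℕ} : ContinuousENorm (EuclideanSpace ℝ (Fin N) →L[ℝ]
    ContinuousMultilinearMap ℝ (fun _ : Fin k => EuclideanSpace ℝ (Fin N)) ℂ) :=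
  SeminormedAddGroup.toContinuousENorm (E := EuclideanSpace ℝ (Fin N) →L[ℝ]
    ContinuousMultilinearMap ℝ (fun _ : Fin k => EuclideanSpace ℝ (Fin N)) ℂ)

instance auxCSMul {N k : ℕ} : ContinuousSMul ℂ (EuclideanSpace ℝ (Fin N) →L[ℝ]
    ContinuousMultilinearMap ℝ (fun _ : Fin k => EuclideanSpace ℝ (Fin N)) ℂ) :=
  @IsBoundedSMul.continuousSMul _ _ _ _ _ _ _ (@NormedSpace.toIsBoundedSMul ℂ (EuclideanSpace ℝ (Fin N) →L[ℝ]
    ContinuousMultilinearMap ℝ (fun _ : Fin k => EuclideanSpace ℝ (Fin N)) ℂ) _ _ inferInstance)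

lemma auxConv {N : ℕ} {f g : EuclideanSpace ℝ (Fin N) → ℂ}
    (hfc : Continuous f) (hfi : Integrable f)
    (hg : ContDiff ℝ (⊤ : ℕ∞) g)
    (hb : ∀ j : ℕ, ∃ C : ℝ, 0 ≤ C ∧ ∀ z, ‖iteratedFDeriv ℝ j g z‖ ≤ C) (j : ℕ) :
    iteratedFDeriv ℝ j (fun z => ∫ y, f y * g (z - y)) =
      fun x => ∫ y, f y • iteratedFDeriv ℝ j g (x - y) := by
  have key : ∀ (k : ℕ) (x : EuclideanSpace ℝ (Fin N)),
      Integrable (fun y => f y • iteratedFDeriv ℝ k g (x - y)) := by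
    intro k x
    obtain ⟨C, hC0, hC⟩ := hb k
    refine (hfi.norm.mul_const C).mono' ?_ (Filter.Eventually.of_forall fun y => ?_)
    · exact (hfc.smul (((hg.continuous_iteratedFDeriv ((by exact_mod_cast le_top))).comp
        (continuous_const.sub continuous_id)))).aestronglyMeasurable
    · rw [norm_smul]
      exact mul_le_mul_of_nonneg_left (hC _) (norm_nonneg _)
  have keyF : ∀ (k : ℕ) (x : EuclideanSpace ℝ (Fin N)),
      Integrable (fun y => f y • fderiv ℝ (iteratedFDeriv ℝ k g) (x - y)) := by
    intro k x
    obtain ⟨C, hC0, hC⟩ := hb (k+1)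
    refine (hfi.norm.mul_const C).mono' (f := fun y => f y • fderiv ℝ (iteratedFDeriv ℝ k g) (x - y)) ?_ (Filter.Eventually.of_forall fun y => ?_)
    · refine (hfc.smul ?_).aestronglyMeasurable
      rw [fderiv_iteratedFDeriv]
      exact ((continuousMultilinearCurryLeftEquiv ℝ
          (fun _ : Fin (k+1) => EuclideanSpace ℝ (Fin N)) ℂ).continuous.comp
        (hg.continuous_iteratedFDeriv (by exact_mod_cast le_top))).comp (continuous_const.sub continuous_id)
    · refine (auxSmulNormCLM _ _).trans ?_
      rw [norm_fderiv_iteratedFDeriv]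
      exact mul_le_mul_of_nonneg_left (hC _) (norm_nonneg _)
  induction j with
  | zero =>
    funext x
    have h0 : iteratedFDeriv ℝ 0 (fun z => ∫ y, f y * g (z - y)) x =
        (continuousMultilinearCurryFin0 ℝ (EuclideanSpace ℝ (Fin N)) ℂ).symm
          (∫ y, f y * g (x - y)) :=
      congrFun (iteratedFDeriv_zero_eq_comp) x
    have hswap := ((continuousMultilinearCurryFin0 ℝ (EuclideanSpace ℝ (Fin N))
      ℂ).symm.toLinearIsometry).integral_comp_comm (μ := volume) (fun y => f y * g (x - y))
    simp only [LinearIsometryEquiv.coe_toLinearIsometry] at hswap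
    have hfun : (fun y => (continuousMultilinearCurryFin0 ℝ (EuclideanSpace ℝ (Fin N)) ℂ).symm
        (f y * g (x - y))) = fun y => f y • iteratedFDeriv ℝ 0 g (x - y) := by
      funext y
      have h1 : iteratedFDeriv ℝ 0 g (x - y) =
          (continuousMultilinearCurryFin0 ℝ (EuclideanSpace ℝ (Fin N)) ℂ).symm (g (x - y)) :=
        congrFun (iteratedFDeriv_zero_eq_comp) (x - y)
      rw [h1]
      exact auxCurry0Smul (f y) (g (x - y))
    calc iteratedFDeriv ℝ 0 (fun z => ∫ y, f y * g (z - y)) x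
        = (continuousMultilinearCurryFin0 ℝ (EuclideanSpace ℝ (Fin N)) ℂ).symm
          (∫ y, f y * g (x - y)) := h0
      _ = ∫ y, (continuousMultilinearCurryFin0 ℝ (EuclideanSpace ℝ (Fin N)) ℂ).symm
          (f y * g (x - y)) := hswap.symm
      _ = ∫ y, f y • iteratedFDeriv ℝ 0 g (x - y) := by rw [hfun]
  | succ k IH =>
    funext x₀
    obtain ⟨C, hC0, hC⟩ := hb (k+1)
    have hder : HasFDerivAt (fun x => ∫ y, f y • iteratedFDeriv ℝ k g (x - y))
        (∫ y, f y • fderiv ℝ (iteratedFDeriv ℝ k g) (x₀ - y)) x₀ := by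
      apply hasFDerivAt_integral_of_dominated_of_fderiv_le
        (F := fun x y => f y • iteratedFDeriv ℝ k g (x - y))
        (F' := fun x y => f y • fderiv ℝ (iteratedFDeriv ℝ k g) (x - y))
        (bound := fun y => ‖f y‖ * C) (s := Metric.ball x₀ 1) (Metric.ball_mem_nhds x₀ one_pos)
      · exact Filter.Eventually.of_forall fun x => (key k x).aestronglyMeasurable
      · exact key k x₀
      · exact (keyF k x₀).aestronglyMeasurable
      · refine Filter.Eventually.of_forall fun y x _ => ?_
        refine (auxSmulNormCLM _ _).trans ?_
        rw [norm_fderiv_iteratedFDeriv]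
        exact mul_le_mul_of_nonneg_left (hC _) (norm_nonneg _)
      · exact hfi.norm.mul_const C
      · refine Filter.Eventually.of_forall fun y x _ => ?_
        have h1 : HasFDerivAt (iteratedFDeriv ℝ k g)
            (fderiv ℝ (iteratedFDeriv ℝ k g) (x - y)) (x - y) :=
          ((hg.differentiable_iteratedFDeriv
            (by exact_mod_cast lt_top_iff_ne_top.mpr (by simp))) (x - y)).hasFDerivAt
        have h2 : HasFDerivAt (fun x : EuclideanSpace ℝ (Fin N) => x - y)
            (ContinuousLinearMap.id ℝ _) x := (hasFDerivAt_id x).sub_const y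
        have h3 := h1.comp x h2
        rw [ContinuousLinearMap.comp_id] at h3
        exact h3.const_smul (f y)
    have hfd : fderiv ℝ (iteratedFDeriv ℝ k (fun z => ∫ y, f y * g (z - y))) x₀ =
        ∫ y, f y • fderiv ℝ (iteratedFDeriv ℝ k g) (x₀ - y) := by
      rw [IH]; exact hder.fderiv
    have hstep : iteratedFDeriv ℝ (k+1) (fun z => ∫ y, f y * g (z - y)) x₀ =
        (continuousMultilinearCurryLeftEquiv ℝ
          (fun _ : Fin (k+1) => EuclideanSpace ℝ (Fin N)) ℂ).symm
          (fderiv ℝ (iteratedFDeriv ℝ k (fun z => ∫ y, f y * g (z - y))) x₀) :=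
      congrFun (iteratedFDeriv_succ_eq_comp_left) x₀
    have hswap := ((continuousMultilinearCurryLeftEquiv ℝ
      (fun _ : Fin (k+1) => EuclideanSpace ℝ (Fin N))
      ℂ).symm.toLinearIsometry).integral_comp_comm (𝕜 := ℝ)
        (F := ContinuousMultilinearMap ℝ (fun _ : Fin (k+1) => EuclideanSpace ℝ (Fin N)) ℂ)
        (E := EuclideanSpace ℝ (Fin N) →L[ℝ]
        ContinuousMultilinearMap ℝ (fun _ : Fin k => EuclideanSpace ℝ (Fin N)) ℂ) (μ := volume)
      (fun y => f y • fderiv ℝ (iteratedFDeriv ℝ k g) (x₀ - y))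
    simp only [LinearIsometryEquiv.coe_toLinearIsometry] at hswap
    have hfun : (fun y => (continuousMultilinearCurryLeftEquiv ℝ
        (fun _ : Fin (k+1) => EuclideanSpace ℝ (Fin N)) ℂ).symm
        (f y • fderiv ℝ (iteratedFDeriv ℝ k g) (x₀ - y)))
        = fun y => f y • iteratedFDeriv ℝ (k+1) g (x₀ - y) := by
      funext y
      have hgstep : iteratedFDeriv ℝ (k+1) g (x₀ - y) =
          (continuousMultilinearCurryLeftEquiv ℝ
            (fun _ : Fin (k+1) => EuclideanSpace ℝ (Fin N)) ℂ).symm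
            (fderiv ℝ (iteratedFDeriv ℝ k g) (x₀ - y)) :=
        congrFun (iteratedFDeriv_succ_eq_comp_left) (x₀ - y)
      rw [auxCurrySmul, ← hgstep]
    calc iteratedFDeriv ℝ (k+1) (fun z => ∫ y, f y * g (z - y)) x₀
        = (continuousMultilinearCurryLeftEquiv ℝ
            (fun _ : Fin (k+1) => EuclideanSpace ℝ (Fin N)) ℂ).symm
          (fderiv ℝ (iteratedFDeriv ℝ k (fun z => ∫ y, f y * g (z - y))) x₀) := hstep
      _ = (continuousMultilinearCurryLeftEquiv ℝ
            (fun _ : Fin (k+1) => EuclideanSpace ℝ (Fin N)) ℂ).symm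
          (∫ y, f y • fderiv ℝ (iteratedFDeriv ℝ k g) (x₀ - y)) := by rw [hfd]
      _ = ∫ y, (continuousMultilinearCurryLeftEquiv ℝ
            (fun _ : Fin (k+1) => EuclideanSpace ℝ (Fin N)) ℂ).symm
          (f y • fderiv ℝ (iteratedFDeriv ℝ k g) (x₀ - y)) := hswap.symm
      _ = ∫ y, f y • iteratedFDeriv ℝ (k+1) g (x₀ - y) := by rw [hfun]

/-- Pointwise convolution estimate (proof of Theorem 3.11): for `f, g ∈ 𝒮_ω(ℝ^N)`,
`‖D^j(f⋆g)(x)‖ e^{nω(|x|)} ≤ e^{Kn} ‖e^{−n₀ω}‖₁ · sup_y |f(y)|e^{(Kn+n₀)ω(|y|)} ·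
sup_y ‖D^j g(y)‖ e^{Knω(|y|)}`. -/
theorem stmt19 {N : ℕ} (hN : 1 ≤ N) (ω : ℝ → ℝ) (hω : IsNQWeight ω)
    (K : ℝ) (hK : 1 ≤ K)
    (hKω : ∀ t₁, 0 ≤ t₁ → ∀ t₂, 0 ≤ t₂ → ω (t₁ + t₂) ≤ K * (1 + ω t₁ + ω t₂))
    (n₀ : ℕ)
    (hn₀ : Integrable (fun x : EuclideanSpace ℝ (Fin N) => Real.exp (-((n₀ : ℝ) * ω ‖x‖))))
    (n : ℕ)
    (f g : EuclideanSpace ℝ (Fin N) → ℂ)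
    (hf : MemSomega ω f) (hg : MemSomega ω g)
    (j : ℕ) (x : EuclideanSpace ℝ (Fin N)) :
    ENNReal.ofReal (‖iteratedFDeriv ℝ j (fun z => ∫ y, f y * g (z - y)) x‖ *
        Real.exp ((n : ℝ) * ω ‖x‖)) ≤
      ENNReal.ofReal (Real.exp (K * n)) *
        ENNReal.ofReal (∫ y : EuclideanSpace ℝ (Fin N), Real.exp (-((n₀ : ℝ) * ω ‖y‖))) *
        (⨆ y : EuclideanSpace ℝ (Fin N),
          ENNReal.ofReal (‖f y‖ * Real.exp ((K * n + n₀) * ω ‖y‖))) *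
        (⨆ y : EuclideanSpace ℝ (Fin N),
          ENNReal.ofReal (‖iteratedFDeriv ℝ j g y‖ * Real.exp (K * n * ω ‖y‖))) := by
  have hfc : Continuous f := hf.1.continuous
  -- decay of f at weight n₀
  obtain ⟨Cf, hCf0, hCf⟩ := auxBound hω hf 0 n₀
  have hf0 : ∀ y, ‖f y‖ ≤ Cf * Real.exp (-((n₀ : ℝ) * ω ‖y‖)) := by
    intro y
    have h := hCf y
    rw [norm_iteratedFDeriv_zero] at h
    have hp := Real.exp_pos ((n₀ : ℝ) * ω ‖y‖)
    have hprod : Real.exp (-((n₀ : ℝ) * ω ‖y‖)) * Real.exp ((n₀ : ℝ) * ω ‖y‖) = 1 := by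
      rw [← Real.exp_add]; simp
    nlinarith [mul_le_mul_of_nonneg_right h (Real.exp_pos (-((n₀ : ℝ) * ω ‖y‖))).le,
      norm_nonneg (f y)]
  have hfi : Integrable f := by
    refine (hn₀.const_mul Cf).mono' hfc.aestronglyMeasurable
      (Filter.Eventually.of_forall fun y => hf0 y)
  have hbg : ∀ k : ℕ, ∃ C : ℝ, 0 ≤ C ∧ ∀ z, ‖iteratedFDeriv ℝ k g z‖ ≤ C := by
    intro k
    obtain ⟨C, hC0, hC⟩ := auxBound hω hg k 0
    exact ⟨C, hC0, fun z => by simpa using hC z⟩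
  have hconv := auxConv hfc hfi hg.1 hbg j
  -- finiteness of the two suprema
  set A := ⨆ y : EuclideanSpace ℝ (Fin N),
    ENNReal.ofReal (‖f y‖ * Real.exp ((K * n + n₀) * ω ‖y‖)) with hAdef
  set B := ⨆ y : EuclideanSpace ℝ (Fin N),
    ENNReal.ofReal (‖iteratedFDeriv ℝ j g y‖ * Real.exp (K * n * ω ‖y‖)) with hBdef
  obtain ⟨C₁, hC₁0, hC₁⟩ := auxBound hω hf 0 (⌈K⌉₊ * n + n₀)
  obtain ⟨C₂, hC₂0, hC₂⟩ := auxBound hω hg j (⌈K⌉₊ * n)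
  have hKle : K ≤ (⌈K⌉₊ : ℝ) := Nat.le_ceil K
  have hAle : A ≤ ENNReal.ofReal C₁ := by
    refine iSup_le fun y => ENNReal.ofReal_le_ofReal ?_
    have h := hC₁ y
    rw [norm_iteratedFDeriv_zero] at h
    refine le_trans ?_ h
    have hωy : 0 ≤ ω ‖y‖ := hω.nonneg _ (norm_nonneg _)
    have hcoef : (K * n + n₀ : ℝ) ≤ ((⌈K⌉₊ * n + n₀ : ℕ) : ℝ) := by
      push_cast
      have : K * n ≤ (⌈K⌉₊ : ℝ) * n := mul_le_mul_of_nonneg_right hKle (Nat.cast_nonneg n)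
      linarith
    have : Real.exp ((K * n + n₀) * ω ‖y‖) ≤ Real.exp (((⌈K⌉₊ * n + n₀ : ℕ) : ℝ) * ω ‖y‖) :=
      Real.exp_le_exp.mpr (mul_le_mul_of_nonneg_right hcoef hωy)
    have habs : ‖f y‖ = ‖f y‖ := rfl
    rw [habs]
    exact mul_le_mul_of_nonneg_left this (norm_nonneg _)
  have hBle : B ≤ ENNReal.ofReal C₂ := by
    refine iSup_le fun y => ENNReal.ofReal_le_ofReal ?_
    have h := hC₂ y
    refine le_trans ?_ h
    have hωy : 0 ≤ ω ‖y‖ := hω.nonneg _ (norm_nonneg _)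
    have hcoef : (K * n : ℝ) ≤ ((⌈K⌉₊ * n : ℕ) : ℝ) := by
      push_cast
      exact mul_le_mul_of_nonneg_right hKle (Nat.cast_nonneg n)
    have : Real.exp (K * n * ω ‖y‖) ≤ Real.exp (((⌈K⌉₊ * n : ℕ) : ℝ) * ω ‖y‖) :=
      Real.exp_le_exp.mpr (mul_le_mul_of_nonneg_right hcoef hωy)
    exact mul_le_mul_of_nonneg_left this (norm_nonneg _)
  have hAne : A ≠ ∞ := ne_top_of_le_ne_top ENNReal.ofReal_ne_top hAle
  have hBne : B ≠ ∞ := ne_top_of_le_ne_top ENNReal.ofReal_ne_top hBle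
  set a₀ : ℝ := A.toReal with ha₀def
  set b₀ : ℝ := B.toReal with hb₀def
  have ha₀0 : 0 ≤ a₀ := ENNReal.toReal_nonneg
  have hb₀0 : 0 ≤ b₀ := ENNReal.toReal_nonneg
  have hA1 : ∀ y, ‖f y‖ * Real.exp ((K * n + n₀) * ω ‖y‖) ≤ a₀ := by
    intro y
    have h : ENNReal.ofReal (‖f y‖ * Real.exp ((K * n + n₀) * ω ‖y‖)) ≤ A :=
      le_iSup (fun y : EuclideanSpace ℝ (Fin N) =>
        ENNReal.ofReal (‖f y‖ * Real.exp ((K * n + n₀) * ω ‖y‖))) y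
    exact (ENNReal.ofReal_le_iff_le_toReal hAne).mp h
  have hB1 : ∀ y, ‖iteratedFDeriv ℝ j g y‖ * Real.exp (K * n * ω ‖y‖) ≤ b₀ := by
    intro y
    have h : ENNReal.ofReal (‖iteratedFDeriv ℝ j g y‖ * Real.exp (K * n * ω ‖y‖)) ≤ B :=
      le_iSup (fun y : EuclideanSpace ℝ (Fin N) =>
        ENNReal.ofReal (‖iteratedFDeriv ℝ j g y‖ * Real.exp (K * n * ω ‖y‖))) y
    exact (ENNReal.ofReal_le_iff_le_toReal hBne).mp h
  have hA2 : ENNReal.ofReal a₀ ≤ A := ENNReal.ofReal_toReal_le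
  have hB2 : ENNReal.ofReal b₀ ≤ B := ENNReal.ofReal_toReal_le
  set I₀ : ℝ := ∫ y : EuclideanSpace ℝ (Fin N), Real.exp (-((n₀ : ℝ) * ω ‖y‖)) with hI₀def
  have hI₀0 : 0 ≤ I₀ := integral_nonneg fun y => (Real.exp_pos _).le
  -- norm bound via the convolution identity
  have h1 : ‖iteratedFDeriv ℝ j (fun z => ∫ y, f y * g (z - y)) x‖ ≤
      ∫ y, ‖f y‖ * ‖iteratedFDeriv ℝ j g (x - y)‖ := by
    rw [congrFun hconv x]
    refine (norm_integral_le_integral_norm _).trans (le_of_eq ?_)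
    simp only [norm_smul]
  -- pointwise estimate
  have hpt : ∀ y, ‖f y‖ * ‖iteratedFDeriv ℝ j g (x - y)‖ * Real.exp ((n : ℝ) * ω ‖x‖) ≤
      Real.exp (K * n) * a₀ * b₀ * Real.exp (-((n₀ : ℝ) * ω ‖y‖)) := by
    intro y
    have hu : 0 ≤ ω ‖y‖ := hω.nonneg _ (norm_nonneg _)
    have hv : 0 ≤ ω ‖x - y‖ := hω.nonneg _ (norm_nonneg _)
    have hw : ω ‖x‖ ≤ K * (1 + ω ‖y‖ + ω ‖x - y‖) := by
      have hxle : ‖x‖ ≤ ‖y‖ + ‖x - y‖ := by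
        have hxyz : y + (x - y) = x := by abel
        calc ‖x‖ = ‖y + (x - y)‖ := by rw [hxyz]
        _ ≤ ‖y‖ + ‖x - y‖ := norm_add_le _ _
      have hmono := hω.monotone (Set.mem_Ici.mpr (norm_nonneg x))
        (Set.mem_Ici.mpr (by positivity)) hxle
      exact hmono.trans (hKω ‖y‖ (norm_nonneg _) ‖x - y‖ (norm_nonneg _))
    have hexp : Real.exp ((n : ℝ) * ω ‖x‖) ≤
        Real.exp (K * n) * Real.exp ((K * n + n₀) * ω ‖y‖) *
          Real.exp (-((n₀ : ℝ) * ω ‖y‖)) * Real.exp (K * n * ω ‖x - y‖) := by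
      rw [← Real.exp_add, ← Real.exp_add, ← Real.exp_add]
      refine Real.exp_le_exp.mpr ?_
      have hn0 : (0 : ℝ) ≤ n := Nat.cast_nonneg n
      have := mul_le_mul_of_nonneg_left hw hn0
      nlinarith [mul_nonneg hu hn0, mul_nonneg hv hn0]
    calc ‖f y‖ * ‖iteratedFDeriv ℝ j g (x - y)‖ * Real.exp ((n : ℝ) * ω ‖x‖)
        ≤ ‖f y‖ * ‖iteratedFDeriv ℝ j g (x - y)‖ *
          (Real.exp (K * n) * Real.exp ((K * n + n₀) * ω ‖y‖) *
            Real.exp (-((n₀ : ℝ) * ω ‖y‖)) * Real.exp (K * n * ω ‖x - y‖)) := by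
          refine mul_le_mul_of_nonneg_left hexp (by positivity)
      _ = Real.exp (K * n) * ((‖f y‖ * Real.exp ((K * n + n₀) * ω ‖y‖)) *
            (‖iteratedFDeriv ℝ j g (x - y)‖ * Real.exp (K * n * ω ‖x - y‖))) *
            Real.exp (-((n₀ : ℝ) * ω ‖y‖)) := by ring
      _ ≤ Real.exp (K * n) * (a₀ * b₀) * Real.exp (-((n₀ : ℝ) * ω ‖y‖)) := by
          refine mul_le_mul_of_nonneg_right (mul_le_mul_of_nonneg_left ?_
            (Real.exp_pos _).le) (Real.exp_pos _).le
          have hfy : ‖f y‖ * Real.exp ((K * n + n₀) * ω ‖y‖) ≤ a₀ := hA1 y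
          exact mul_le_mul hfy (hB1 (x - y)) (by positivity) ha₀0
      _ = Real.exp (K * n) * a₀ * b₀ * Real.exp (-((n₀ : ℝ) * ω ‖y‖)) := by ring
  -- integrability of the convolution norm integrand
  obtain ⟨Cg, hCg0, hCg⟩ := hbg j
  have hInt1 : Integrable (fun y => ‖f y‖ * ‖iteratedFDeriv ℝ j g (x - y)‖) := by
    refine (hfi.norm.mul_const Cg).mono' ?_ (Filter.Eventually.of_forall fun y => ?_)
    · exact (hfc.norm.mul ((hg.1.continuous_iteratedFDeriv
        (by exact_mod_cast le_top)).comp (continuous_const.sub continuous_id)).norm).aestronglyMeasurable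
    · rw [Real.norm_of_nonneg (by positivity)]
      exact mul_le_mul_of_nonneg_left (hCg _) (norm_nonneg _)
  have hIneq : (∫ y, ‖f y‖ * ‖iteratedFDeriv ℝ j g (x - y)‖) * Real.exp ((n : ℝ) * ω ‖x‖) ≤
      Real.exp (K * n) * a₀ * b₀ * I₀ := by
    rw [← integral_mul_const]
    have h2 := integral_mono (μ := volume) (hInt1.mul_const (Real.exp ((n : ℝ) * ω ‖x‖)))
      (hn₀.const_mul (Real.exp (K * n) * a₀ * b₀)) (fun y => by
        simpa [mul_assoc] using hpt y)
    rw [integral_const_mul] at h2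
    exact h2
  -- final real bound
  have hfinal : ‖iteratedFDeriv ℝ j (fun z => ∫ y, f y * g (z - y)) x‖ *
      Real.exp ((n : ℝ) * ω ‖x‖) ≤ Real.exp (K * n) * a₀ * b₀ * I₀ :=
    le_trans (mul_le_mul_of_nonneg_right h1 (Real.exp_pos _).le) hIneq
  -- pass to ENNReal
  refine le_trans (ENNReal.ofReal_le_ofReal hfinal) ?_
  have heq : Real.exp (K * n) * a₀ * b₀ * I₀ = (Real.exp (K * n) * I₀) * (a₀ * b₀) := by ring
  rw [heq, ENNReal.ofReal_mul (by positivity),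
    ENNReal.ofReal_mul (Real.exp_pos _).le, ENNReal.ofReal_mul ha₀0]
  calc ENNReal.ofReal (Real.exp (K * n)) * ENNReal.ofReal I₀ *
        (ENNReal.ofReal a₀ * ENNReal.ofReal b₀)
      ≤ ENNReal.ofReal (Real.exp (K * n)) * ENNReal.ofReal I₀ * (A * B) :=
        mul_le_mul_right (mul_le_mul' hA2 hB2) _
    _ = ENNReal.ofReal (Real.exp (K * n)) * ENNReal.ofReal I₀ * A * B := by
        ring

end
end
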